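/- Let ℓ : ℝ → ℝ be differentiable and let θ* be a local minimum of the regularized empirical loss L_n(·;λ) at which every neuron is active, i.e., a_j* ≠ 0 for all j ∈ [m]. Write ℓ'_i = ℓ'(−y_i f(x_i;θ*)), I_j = {i ∈ [n] : w_j*^⊤(x_i⊙φ_j) = 0}, let S_j be the linear span of {x_i⊙φ_j : i ∈ I_j}, and let P_{S_j} denote orthogonal projection onto S_j. Then for every j ∈ [m], λ_j = ‖ Σ_{i=1}^n ℓ'_i y_i 1{w_j*^⊤(x_i⊙φ_j) > 0} · ((x_i⊙φ_j) − P_{S_j}(x_i⊙φ_j)) ‖₂. -/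

import Mathlib

/-!
Write `z_i = x_i ⊙ φ_j`, `c_i = ℓ'_i y_i 1{w_j*ᵀ z_i > 0}` and `V = Σ c_i (z_i - P_{S_j} z_i)`.
Moving `a_j` alone is a smooth perturbation, and its first-order condition reads
`λ_j a_j* = Σ c_i ⟪w_j*, z_i⟫ = ⟪w_j*, V⟫`, since `w_j* ⊥ S_j`. Moving `w_j` in the direction `V`
is smooth as well, because `V ⊥ S_j` keeps every pre-activation that vanishes at `θ*` equal to
zero; its first-order condition reads `λ_j ⟪w_j*, V⟫ = a_j* Σ c_i ⟪V, z_i⟫ = a_j* ‖V‖²`.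
Hence `λ_j² a_j* = a_j* ‖V‖²`, and `a_j* ≠ 0`, `λ_j > 0` give `λ_j = ‖V‖`.
-/

open scoped BigOperators
open MeasureTheory

noncomputable section

/-- Vectors in `ℝ^d` with the Euclidean norm. -/
abbrev Vec (d : ℕ) := EuclideanSpace ℝ (Fin d)

/-- Hadamard (entrywise) product. -/
def nnHad {d : ℕ} (x φ : Vec d) : Vec d := WithLp.toLp 2 (fun i => x i * φ i)

/-- ReLU. -/
def nnRelu (z : ℝ) : ℝ := max z 0

/-- Euclidean dot product. -/
def nnDot {d : ℕ} (u v : Vec d) : ℝ := ∑ i, u i * v i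

/-- Output of the two-layer ReLU network with masks `φ`. -/
def nnOut {d m : ℕ} (φ : ℕ → Vec d) (a : Fin m → ℝ) (w : Fin m → Vec d) (x : Vec d) : ℝ :=
  ∑ j, a j * nnRelu (nnDot (w j) (nnHad x (φ (j : ℕ))))

/-- The regularized empirical loss `L_n(θ; λ)`. -/
def nnLoss {d m n : ℕ} (ℓ : ℝ → ℝ) (φ : ℕ → Vec d) (X : Fin n → Vec d) (Y : Fin n → ℝ)
    (lam : Fin m → ℝ) (θ : (Fin m → ℝ) × (Fin m → Vec d)) : ℝ :=
  (∑ i, ℓ (-(Y i) * nnOut φ θ.1 θ.2 (X i)))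
    + (1 / 2) * ∑ j, lam j * ((θ.1 j) ^ 2 + ‖θ.2 j‖ ^ 2)

/-- The training (misclassification) error `R_n(θ; f)`. -/
def nnErr {d m n : ℕ} (φ : ℕ → Vec d) (X : Fin n → Vec d) (Y : Fin n → ℝ)
    (θ : (Fin m → ℝ) × (Fin m → Vec d)) : ℝ :=
  (1 / (n : ℝ)) * ∑ i, if Y i = Real.sign (nnOut φ θ.1 θ.2 (X i)) then (0 : ℝ) else 1

/-- The masks are binary vectors. -/
def BinaryMasks {d : ℕ} (φ : ℕ → Vec d) : Prop := ∀ k i, φ k i = 0 ∨ φ k i = 1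

/-- The mask sequence is periodic with period `p`. -/
def PeriodicMasks {d : ℕ} (φ : ℕ → Vec d) (p : ℕ) : Prop := ∀ k, φ (k + p) = φ k

/-- Assumption 1 on the loss: convex, non-decreasing, twice differentiable, `ℓ` and `ℓ'`
are `1`-Lipschitz, and `ℓ'(z) ≤ exp (a z)` for a positive constant `a`. -/
def LossAssumption (ℓ ℓ' : ℝ → ℝ) (a : ℝ) : Prop :=
  ConvexOn ℝ Set.univ ℓ ∧ Monotone ℓ ∧ (∀ z, HasDerivAt ℓ (ℓ' z) z) ∧
  (∀ z, DifferentiableAt ℝ ℓ' z) ∧ LipschitzWith 1 ℓ ∧ LipschitzWith 1 ℓ' ∧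
  0 < a ∧ ∀ z, ℓ' z ≤ Real.exp (a * z)

/-- Assumption 2 on the dataset: all data in the unit ball, and all but `E` points are
separated with margin `γ` by some network in the class `H_φ`. -/
def DatasetAssumption {d n : ℕ} (φ : ℕ → Vec d) (X : Fin n → Vec d) (Y : Fin n → ℝ)
    (E γ : ℝ) : Prop :=
  (∀ i, ‖X i‖ ≤ 1) ∧
  ∃ (M : ℕ) (c : Fin M → ℝ) (v : Fin M → Vec d),
    1 ≤ M ∧ (∑ j, |c j|) = 1 ∧ (∀ j, ‖v j‖ = 1) ∧
    (n : ℝ) - E ≤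
      ∑ i, (if γ ≤ Y i * ∑ j, c j * nnRelu (nnDot (v j) (nnHad (X i) (φ (j : ℕ)))) then (1 : ℝ)
        else 0)

open scoped RealInnerProductSpace

section OrthogonalResidual

variable {E ι : Type*} [NormedAddCommGroup E] [InnerProductSpace ℝ E]

lemma mem_orthogonal_span_of_forall_inner_eq_zero {s : Set E} {w : E}
    (h : ∀ u ∈ s, ⟪u, w⟫ = 0) : w ∈ (Submodule.span ℝ s)ᗮ :=
  (Submodule.isOrtho_span.2 fun u hu _ hv => Set.mem_singleton_iff.1 hv ▸ h u hu).ge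
    (Submodule.mem_span_singleton_self w)

variable (K : Submodule ℝ E) [K.HasOrthogonalProjection] (s : Finset ι) (c : ι → ℝ) (z : ι → E)

lemma sum_smul_sub_starProjection_mem_orthogonal :
    ∑ i ∈ s, c i • (z i - K.starProjection (z i)) ∈ Kᗮ :=
  Submodule.sum_mem _ fun i _ => Submodule.smul_mem _ _ (K.sub_starProjection_mem_orthogonal (z i))

lemma inner_sum_smul_sub_starProjection {u : E} (hu : u ∈ Kᗮ) :
    ⟪u, ∑ i ∈ s, c i • (z i - K.starProjection (z i))⟫ = ∑ i ∈ s, c i * ⟪u, z i⟫ := by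
  simp only [inner_sum, real_inner_smul_right, inner_sub_right,
    Submodule.inner_left_of_mem_orthogonal (K.starProjection_apply_mem _) hu, sub_zero]

end OrthogonalResidual

lemma nnRelu_eq_ite_mul (x : ℝ) : nnRelu x = (if 0 < x then 1 else 0) * x := by
  split_ifs with h
  · simp [nnRelu, h.le]
  · simp [nnRelu, not_lt.1 h]

lemma hasDerivAt_nnRelu {c : ℝ} (hc : c ≠ 0) : HasDerivAt nnRelu (if 0 < c then 1 else 0) c := by
  rcases hc.lt_or_gt with hc | hc
  · rw [if_neg hc.not_gt]
    exact (hasDerivAt_const c 0).congr_of_eventuallyEq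
      ((eventually_lt_nhds hc).mono fun x hx => max_eq_right hx.le)
  · rw [if_pos hc]
    exact (hasDerivAt_id c).congr_of_eventuallyEq
      ((eventually_gt_nhds hc).mono fun x hx => max_eq_left hx.le)

lemma hasDerivAt_nnRelu_line {c s : ℝ} (h : c = 0 → s = 0) :
    HasDerivAt (fun t => nnRelu (c + t * s)) ((if 0 < c then 1 else 0) * s) 0 := by
  by_cases hc : c = 0
  · simpa [hc, h hc] using hasDerivAt_const (0 : ℝ) (nnRelu 0)
  · have hline : HasDerivAt (fun t : ℝ => c + t * s) s 0 := by
      simpa using ((hasDerivAt_id (0 : ℝ)).mul_const s).const_add c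
    exact (hasDerivAt_nnRelu hc).comp_of_eq 0 hline (by simp)

lemma nnDot_eq_inner {d : ℕ} (u v : Vec d) : nnDot u v = ⟪u, v⟫ := by
  simp [nnDot, PiLp.inner_apply, mul_comm]

lemma nnDot_add_smul_left {d : ℕ} (u v x : Vec d) (t : ℝ) :
    nnDot (u + t • v) x = nnDot u x + t * nnDot v x := by
  simp only [nnDot_eq_inner, inner_add_left, real_inner_smul_left]

section Network

variable {d m : ℕ} (φ : ℕ → Vec d)

def nnOutLineDeriv (θ δ : (Fin m → ℝ) × (Fin m → Vec d)) (x : Vec d) : ℝ :=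
  ∑ k, (δ.1 k * nnRelu (nnDot (θ.2 k) (nnHad x (φ k)))
    + θ.1 k * ((if 0 < nnDot (θ.2 k) (nnHad x (φ k)) then 1 else 0)
      * nnDot (δ.2 k) (nnHad x (φ k))))

lemma nnOutLineDeriv_single_outer (θ : (Fin m → ℝ) × (Fin m → Vec d)) (j : Fin m) (x : Vec d) :
    nnOutLineDeriv φ θ (Pi.single j 1, 0) x = nnRelu (nnDot (θ.2 j) (nnHad x (φ j))) := by
  rw [nnOutLineDeriv, Finset.sum_eq_single j (fun k _ hk => by simp [hk, nnDot]) (by simp)]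
  simp [nnDot]

lemma nnOutLineDeriv_single_inner (θ : (Fin m → ℝ) × (Fin m → Vec d)) (j : Fin m) (v x : Vec d) :
    nnOutLineDeriv φ θ (0, Pi.single j v) x =
      θ.1 j * ((if 0 < nnDot (θ.2 j) (nnHad x (φ j)) then 1 else 0) * nnDot v (nnHad x (φ j))) := by
  rw [nnOutLineDeriv, Finset.sum_eq_single j (fun k _ hk => by simp [hk, nnDot]) (by simp)]
  simp

lemma hasDerivAt_nnOut_line (θ δ : (Fin m → ℝ) × (Fin m → Vec d)) (x : Vec d)
    (hδ : ∀ k, nnDot (θ.2 k) (nnHad x (φ k)) = 0 → nnDot (δ.2 k) (nnHad x (φ k)) = 0) :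
    HasDerivAt (fun t : ℝ => nnOut φ (θ + t • δ).1 (θ + t • δ).2 x)
      (nnOutLineDeriv φ θ δ x) 0 := by
  simp only [nnOut, nnOutLineDeriv, Prod.fst_add, Prod.snd_add, Prod.smul_fst, Prod.smul_snd,
    Pi.add_apply, Pi.smul_apply, smul_eq_mul, nnDot_add_smul_left]
  refine HasDerivAt.fun_sum fun k _ => ?_
  have hweight : HasDerivAt (fun t : ℝ => θ.1 k + t * δ.1 k) (δ.1 k) 0 := by
    simpa using ((hasDerivAt_id (0 : ℝ)).mul_const (δ.1 k)).const_add (θ.1 k)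
  exact (hweight.fun_mul (hasDerivAt_nnRelu_line (hδ k))).congr_deriv (by simp)

lemma hasDerivAt_regularizer_line (lam : Fin m → ℝ) (θ δ : (Fin m → ℝ) × (Fin m → Vec d)) :
    HasDerivAt
      (fun t : ℝ => (1 / 2) * ∑ k, lam k * (((θ + t • δ).1 k) ^ 2 + ‖(θ + t • δ).2 k‖ ^ 2))
      (∑ k, lam k * (θ.1 k * δ.1 k + ⟪θ.2 k, δ.2 k⟫)) 0 := by
  simp only [Prod.fst_add, Prod.snd_add, Prod.smul_fst, Prod.smul_snd, Pi.add_apply,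
    Pi.smul_apply, smul_eq_mul]
  have hterm : ∀ k, HasDerivAt
      (fun t : ℝ => lam k * ((θ.1 k + t * δ.1 k) ^ 2 + ‖θ.2 k + t • δ.2 k‖ ^ 2))
      (lam k * (2 * θ.1 k * δ.1 k + 2 * ⟪θ.2 k, δ.2 k⟫)) 0 := fun k => by
    have ha : HasDerivAt (fun t : ℝ => θ.1 k + t * δ.1 k) (δ.1 k) 0 := by
      simpa using ((hasDerivAt_id (0 : ℝ)).mul_const (δ.1 k)).const_add (θ.1 k)
    have hw : HasDerivAt (fun t : ℝ => θ.2 k + t • δ.2 k) (δ.2 k) 0 := by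
      simpa using ((hasDerivAt_id (0 : ℝ)).smul_const (δ.2 k)).const_add (θ.2 k)
    exact (((ha.fun_pow 2).fun_add hw.norm_sq).const_mul (lam k)).congr_deriv (by simp)
  refine ((HasDerivAt.fun_sum fun k _ => hterm k).const_mul (1 / 2)).congr_deriv ?_
  rw [Finset.mul_sum]
  exact Finset.sum_congr rfl fun k _ => by ring

end Network

section FirstOrder

variable {d m n : ℕ} {φ : ℕ → Vec d} {X : Fin n → Vec d} {Y : Fin n → ℝ} {ℓ ℓ' : ℝ → ℝ}
  {lam : Fin m → ℝ} {θ : (Fin m → ℝ) × (Fin m → Vec d)}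

/-- The hypothesis on `δ` keeps every pre-activation that sits on the kink of the ReLU on it,
which is what makes the loss differentiable along `θ + t δ`. -/
lemma IsLocalMin.nnLoss_firstOrder_line (hmin : IsLocalMin (nnLoss ℓ φ X Y lam) θ)
    (hderiv : ∀ z, HasDerivAt ℓ (ℓ' z) z) (δ : (Fin m → ℝ) × (Fin m → Vec d))
    (hδ : ∀ i k, nnDot (θ.2 k) (nnHad (X i) (φ k)) = 0 → nnDot (δ.2 k) (nnHad (X i) (φ k)) = 0) :
    ∑ k, lam k * (θ.1 k * δ.1 k + ⟪θ.2 k, δ.2 k⟫)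
      = ∑ i, ℓ' (-(Y i) * nnOut φ θ.1 θ.2 (X i)) * Y i * nnOutLineDeriv φ θ δ (X i) := by
  have hline : IsLocalMin (fun t : ℝ => nnLoss ℓ φ X Y lam (θ + t • δ)) 0 :=
    IsLocalMin.comp_continuous (f := nnLoss ℓ φ X Y lam) (g := fun t : ℝ => θ + t • δ) (b := 0)
      (by simpa using hmin) (by fun_prop)
  have hD : HasDerivAt (fun t : ℝ => nnLoss ℓ φ X Y lam (θ + t • δ))
      (∑ i, ℓ' (-(Y i) * nnOut φ θ.1 θ.2 (X i)) * (-(Y i) * nnOutLineDeriv φ θ δ (X i))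
        + ∑ k, lam k * (θ.1 k * δ.1 k + ⟪θ.2 k, δ.2 k⟫)) 0 :=
    (HasDerivAt.fun_sum fun i _ => (hderiv _).comp_of_eq 0
      ((hasDerivAt_nnOut_line φ θ δ (X i) (hδ i)).const_mul (-(Y i))) (by simp)).fun_add
      (hasDerivAt_regularizer_line lam θ δ)
  have hsum : ∑ i, ℓ' (-(Y i) * nnOut φ θ.1 θ.2 (X i)) * (-(Y i) * nnOutLineDeriv φ θ δ (X i))
      = -∑ i, ℓ' (-(Y i) * nnOut φ θ.1 θ.2 (X i)) * Y i * nnOutLineDeriv φ θ δ (X i) := by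
    rw [← Finset.sum_neg_distrib]
    exact Finset.sum_congr rfl fun i _ => by ring
  linarith [hline.hasDerivAt_eq_zero hD]

lemma IsLocalMin.nnLoss_firstOrder_outer (hmin : IsLocalMin (nnLoss ℓ φ X Y lam) θ)
    (hderiv : ∀ z, HasDerivAt ℓ (ℓ' z) z) (j : Fin m) :
    lam j * θ.1 j = ∑ i, ℓ' (-(Y i) * nnOut φ θ.1 θ.2 (X i)) * Y i *
      (if 0 < nnDot (θ.2 j) (nnHad (X i) (φ j)) then 1 else 0) *
        nnDot (θ.2 j) (nnHad (X i) (φ j)) := by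
  have h := hmin.nnLoss_firstOrder_line hderiv (Pi.single j 1, 0) (by simp [nnDot])
  rw [Finset.sum_eq_single j (fun k _ hk => by simp [hk]) (by simp)] at h
  simp only [nnOutLineDeriv_single_outer, Pi.single_eq_same, Pi.zero_apply, inner_zero_right,
    mul_one, add_zero] at h
  rw [h]
  exact Finset.sum_congr rfl fun i _ => by rw [nnRelu_eq_ite_mul]; ring

lemma IsLocalMin.nnLoss_firstOrder_inner (hmin : IsLocalMin (nnLoss ℓ φ X Y lam) θ)
    (hderiv : ∀ z, HasDerivAt ℓ (ℓ' z) z) (j : Fin m) (v : Vec d)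
    (hv : ∀ i, nnDot (θ.2 j) (nnHad (X i) (φ j)) = 0 → nnDot v (nnHad (X i) (φ j)) = 0) :
    lam j * ⟪θ.2 j, v⟫ = θ.1 j * ∑ i, ℓ' (-(Y i) * nnOut φ θ.1 θ.2 (X i)) * Y i *
      (if 0 < nnDot (θ.2 j) (nnHad (X i) (φ j)) then 1 else 0) * nnDot v (nnHad (X i) (φ j)) := by
  have h := hmin.nnLoss_firstOrder_line hderiv (0, Pi.single j v) fun i k => by
    rcases eq_or_ne k j with rfl | hk
    · simpa using hv i
    · simp [hk, nnDot]
  rw [Finset.sum_eq_single j (fun k _ hk => by simp [hk]) (by simp)] at h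
  simp only [nnOutLineDeriv_single_inner, Pi.single_eq_same, Pi.zero_apply, mul_zero,
    zero_add] at h
  rw [h, Finset.mul_sum]
  exact Finset.sum_congr rfl fun i _ => by ring

end FirstOrder

theorem local_min_all_active_lambda_formula_general
    {d m n : ℕ} (φ : ℕ → Vec d)
    (X : Fin n → Vec d) (Y : Fin n → ℝ)
    (ℓ ℓ' : ℝ → ℝ) (hderiv : ∀ z, HasDerivAt ℓ (ℓ' z) z)
    (lam : Fin m → ℝ) (hlam : ∀ j, 0 < lam j)
    (θstar : (Fin m → ℝ) × (Fin m → Vec d))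
    (hmin : IsLocalMin (nnLoss ℓ φ X Y lam) θstar)
    (hactive : ∀ j, θstar.1 j ≠ 0) :
    ∀ j : Fin m,
      lam j =
        ‖∑ i, (ℓ' (-(Y i) * nnOut φ θstar.1 θstar.2 (X i)) * Y i *
            (if 0 < nnDot (θstar.2 j) (nnHad (X i) (φ (j : ℕ))) then (1 : ℝ) else 0)) •
          (nnHad (X i) (φ (j : ℕ)) -
            (Submodule.orthogonalProjection
              (Submodule.span ℝ
                ((fun i : Fin n => nnHad (X i) (φ (j : ℕ))) ''
                  {i | nnDot (θstar.2 j) (nnHad (X i) (φ (j : ℕ))) = 0}))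
              (nnHad (X i) (φ (j : ℕ))) : Vec d))‖ := by
  intro j
  set w := θstar.2 j
  set z : Fin n → Vec d := fun i => nnHad (X i) (φ j)
  set c : Fin n → ℝ := fun i => ℓ' (-(Y i) * nnOut φ θstar.1 θstar.2 (X i)) * Y i *
    (if 0 < nnDot w (z i) then 1 else 0)
  set S := Submodule.span ℝ (z '' {i | nnDot w (z i) = 0})
  set V : Vec d := ∑ i, c i • (z i - S.starProjection (z i))
  change lam j = ‖V‖
  have hwS : w ∈ Sᗮ := mem_orthogonal_span_of_forall_inner_eq_zero <| by
    rintro _ ⟨i, hi, rfl⟩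
    rwa [real_inner_comm, ← nnDot_eq_inner]
  have hVS : V ∈ Sᗮ := sum_smul_sub_starProjection_mem_orthogonal S _ c z
  have hwV : ⟪w, V⟫ = ∑ i, c i * nnDot w (z i) := by
    simp only [nnDot_eq_inner]
    exact inner_sum_smul_sub_starProjection S Finset.univ c z hwS
  have hVV : ‖V‖ ^ 2 = ∑ i, c i * nnDot V (z i) := by
    simp only [nnDot_eq_inner, ← real_inner_self_eq_norm_sq]
    exact inner_sum_smul_sub_starProjection S Finset.univ c z hVS
  have h₁ : lam j * θstar.1 j = ⟪w, V⟫ := hwV ▸ hmin.nnLoss_firstOrder_outer hderiv j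
  have h₂ : lam j * ⟪w, V⟫ = θstar.1 j * ‖V‖ ^ 2 := hVV ▸ hmin.nnLoss_firstOrder_inner hderiv j V
    fun i hi => by
      rw [nnDot_eq_inner, real_inner_comm]
      exact Submodule.inner_right_of_mem_orthogonal
        (Submodule.subset_span ⟨i, hi, rfl⟩ : z i ∈ S) hVS
  have hsq : lam j ^ 2 = ‖V‖ ^ 2 :=
    mul_left_cancel₀ (hactive j) (by linear_combination lam j * h₁ + h₂)
  exact (pow_left_inj₀ (hlam j).le (norm_nonneg V) two_ne_zero).1 hsq

theorem local_min_all_active_lambda_formula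
    {d m n : ℕ} (φ : ℕ → Vec d)
    (X : Fin n → Vec d) (Y : Fin n → ℝ)
    (hY : ∀ i, Y i = 1 ∨ Y i = -1)
    (ℓ ℓ' : ℝ → ℝ) (hderiv : ∀ z, HasDerivAt ℓ (ℓ' z) z)
    (lam : Fin m → ℝ) (hlam : ∀ j, 0 < lam j)
    (θstar : (Fin m → ℝ) × (Fin m → Vec d))
    (hmin : IsLocalMin (nnLoss ℓ φ X Y lam) θstar)
    (hactive : ∀ j, θstar.1 j ≠ 0) :
    ∀ j : Fin m,
      lam j =
        ‖∑ i, (ℓ' (-(Y i) * nnOut φ θstar.1 θstar.2 (X i)) * Y i *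
            (if 0 < nnDot (θstar.2 j) (nnHad (X i) (φ (j : ℕ))) then (1 : ℝ) else 0)) •
          (nnHad (X i) (φ (j : ℕ)) -
            (Submodule.orthogonalProjection
              (Submodule.span ℝ
                ((fun i : Fin n => nnHad (X i) (φ (j : ℕ))) ''
                  {i | nnDot (θstar.2 j) (nnHad (X i) (φ (j : ℕ))) = 0}))
              (nnHad (X i) (φ (j : ℕ))) : Vec d))‖ :=
  local_min_all_active_lambda_formula_general φ X Y ℓ ℓ' hderiv lam hlam θstar hmin hactive
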